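/- For every integer ℓ ≥ 2 with binary power representation L = (n_1, …, n_k), the securities of the almost complete tree F(ℓ) and of T_L coincide: R(F(ℓ)) = R(T_L) = 2ℓ − n_1 − k − 1. -/

import Mathlib

/-- Proper binary trees: every internal vertex has exactly two children. -/
inductive BTree : Type
  | leaf : BTree
  | node : BTree → BTree → BTree
  deriving DecidableEq

namespace BTree

/-- The rank (protection number) of the root of a proper binary tree:
the minimum distance from the root to a leaf descendant. -/
def rank : BTree → ℕ
  | leaf => 0
  | node l r => min l.rank r.rank + 1

/-- The security of a proper binary tree: the sum of the ranks of all vertices. -/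
def security : BTree → ℕ
  | leaf => 0
  | node l r => (node l r).rank + l.security + r.security

/-- The number of leaves. -/
def leafCount : BTree → ℕ
  | leaf => 1
  | node l r => l.leafCount + r.leafCount

/-- The height: maximum distance from the root to a leaf. -/
def height : BTree → ℕ
  | leaf => 0
  | node l r => max l.height r.height + 1

/-- A tree is complete if all leaves are at the same depth. -/
def IsComplete : BTree → Prop
  | leaf => True
  | node l r => IsComplete l ∧ IsComplete r ∧ l.height = r.height

/-- The subtree at a given position (a list of directions from the root;
`false` = first child, `true` = second child), if the position exists. -/
def subtreeAt : BTree → List Bool → Option BTree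
  | t, [] => some t
  | leaf, _ :: _ => none
  | node l _, false :: p => subtreeAt l p
  | node _ r, true :: p => subtreeAt r p

/-- Replace the subtree at a given position by `s`. -/
def replaceAt : BTree → List Bool → BTree → BTree
  | _, [], s => s
  | leaf, _ :: _, _ => leaf
  | node l r, false :: p, s => node (replaceAt l p s) r
  | node l r, true :: p, s => node l (replaceAt r p s)

/-- The rank of the vertex at position `p` in `T` (rank of a vertex only depends
on the subtree consisting of the vertex and its descendants). -/
def rankAt (T : BTree) (p : List Bool) : ℕ := ((T.subtreeAt p).map rank).getD 0

/-- The vertex at position `p` in `T` is saturated: its subtree is complete, but the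
subtree of none of its (proper) ancestors is complete. -/
def Saturated (T : BTree) (p : List Bool) : Prop :=
  (∃ s, T.subtreeAt p = some s ∧ IsComplete s) ∧
  ∀ q s, q <+: p → q ≠ p → T.subtreeAt q = some s → ¬ IsComplete s

/-- The complete binary tree of height `m` (with `2 ^ m` leaves). -/
def completeTree : ℕ → BTree
  | 0 => leaf
  | m + 1 => node (completeTree m) (completeTree m)

/-- The tree `T_L` for `L = (n₁, …, n_k)`: a binary caterpillar whose spine vertices carry
complete binary trees with `2 ^ nᵢ` leaves. -/
def TL : List ℕ → BTree
  | [] => leaf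
  | n :: ns => ns.foldl (fun acc m => node acc (completeTree m)) (completeTree n)

/-- Helper for the almost complete tree: a complete binary tree of height `m`
whose leftmost `r` leaves each receive two leaf children. -/
def buildF : ℕ → ℕ → BTree
  | 0, r => if r = 0 then leaf else node leaf leaf
  | m + 1, r => node (buildF m (min r (2 ^ m))) (buildF m (r - 2 ^ m))

/-- The almost complete ("good") tree `F(ℓ)` on `ℓ` leaves. -/
def F (ℓ : ℕ) : BTree := buildF (Nat.log 2 ℓ) (ℓ - 2 ^ Nat.log 2 ℓ)

end BTree

/-!
Both securities have closed forms. A complete tree of height `m` has security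
`2^(m+1) - m - 2`. In `T_L` the ranks strictly decrease along the spine, so the spine vertex
carrying the complete tree of height `nᵢ` has rank `nᵢ + 1`; summing gives `2ℓ - n₁ - k - 1`.
In `F(ℓ)`, with `m = ⌊log₂ ℓ⌋` and `ℓ = 2^m + r`, induction on `m` gives security
`2^(m+1) + 2r - m - 2 - s(r)`, where `s(r) = r.bitIndices.length` is the binary digit sum of `r`;
since `s(ℓ) = s(r) + 1 = k`, this is again `2ℓ - n₁ - k - 1`.
-/

namespace Nat

theorem sum_map_two_pow_lt {L : List ℕ} (hL : L.SortedGT) {n : ℕ} (h : ∀ a ∈ L, a < n) :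
    (L.map (2 ^ ·)).sum < 2 ^ n := by
  rw [← List.sum_toFinset _ hL.pairwise.nodup]
  exact geomSum_lt le_rfl (by simpa using h)

theorem length_bitIndices_sum_map_two_pow {L : List ℕ} (hL : L.SortedGT) :
    (L.map (2 ^ ·)).sum.bitIndices.length = L.length := by
  rw [← List.sum_reverse, ← List.map_reverse, bitIndices_sum_map_two_pow hL.reverse,
    List.length_reverse]

theorem length_bitIndices_two_pow_add {m r : ℕ} (hr : r < 2 ^ m) :
    (2 ^ m + r).bitIndices.length = r.bitIndices.length + 1 := by
  have hlt : ∀ a ∈ r.bitIndices, a < m := fun a ha =>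
    (Nat.pow_lt_pow_iff_right (by norm_num)).1 ((two_pow_le_of_mem_bitIndices ha).trans_lt hr)
  have hsorted : (m :: r.bitIndices.reverse).SortedGT :=
    List.sortedGT_iff_pairwise.2 (List.pairwise_cons.2
      ⟨fun a ha => hlt a (List.mem_reverse.1 ha), bitIndices_sorted.reverse.pairwise⟩)
  simpa [List.map_reverse] using length_bitIndices_sum_map_two_pow hsorted

theorem log_two_sum_map_two_pow {n : ℕ} {L : List ℕ} (hL : (n :: L).SortedGT) :
    Nat.log 2 ((n :: L).map (2 ^ ·)).sum = n := by
  obtain ⟨hn, hL⟩ := List.pairwise_cons.1 hL.pairwise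
  have hlt := sum_map_two_pow_lt hL.sortedGT hn
  rw [List.map_cons, List.sum_cons]
  refine log_eq_of_pow_le_of_lt_pow (by omega) ?_
  rw [pow_succ]
  omega

end Nat

namespace BTree

@[simp]
theorem rank_completeTree (m : ℕ) : (completeTree m).rank = m := by
  induction m with
  | zero => rfl
  | succ m ih => simp [completeTree, rank, ih]

theorem security_completeTree_add (m : ℕ) :
    (completeTree m).security + m + 2 = 2 ^ (m + 1) := by
  induction m with
  | zero => rfl
  | succ m ih =>
    simp only [completeTree, security, rank, rank_completeTree, min_self, pow_succ] at ih ⊢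
    omega

theorem buildF_zero_right (m : ℕ) : buildF m 0 = completeTree m := by
  induction m with
  | zero => rfl
  | succ m ih => simp [buildF, completeTree, ih]

theorem buildF_two_pow (m : ℕ) : buildF m (2 ^ m) = completeTree (m + 1) := by
  induction m with
  | zero => rfl
  | succ m ih =>
    rw [buildF, min_eq_right (Nat.pow_le_pow_right two_pos m.le_succ), pow_succ, Nat.mul_two,
      Nat.add_sub_cancel, ih]
    rfl

theorem rank_buildF_of_lt {m r : ℕ} (hr : r < 2 ^ m) : (buildF m r).rank = m := by
  induction m generalizing r with
  | zero => simp_all [buildF, rank]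
  | succ m ih =>
    rw [pow_succ] at hr
    rcases lt_trichotomy r (2 ^ m) with hlt | rfl | hgt
    · simp [buildF, rank, min_eq_left hlt.le, Nat.sub_eq_zero_of_le hlt.le, ih hlt,
        buildF_zero_right]
    · simp [buildF, rank, buildF_two_pow, buildF_zero_right]
    · simp [buildF, rank, min_eq_right hgt.le, buildF_two_pow,
        ih (show r - 2 ^ m < 2 ^ m by omega)]

theorem security_buildF_add {m r : ℕ} (hr : r ≤ 2 ^ m) :
    (buildF m r).security + r.bitIndices.length + m + 2 = 2 ^ (m + 1) + 2 * r := by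
  induction m generalizing r with
  | zero => interval_cases r <;> rfl
  | succ m ih =>
    have hpow : 2 ^ (m + 1) = 2 ^ m + 2 ^ m := by ring
    obtain rfl | hr := hr.eq_or_lt
    · have := security_completeTree_add (m + 1 + 1)
      rw [buildF_two_pow, Nat.bitIndices_two_pow, List.length_singleton]
      rw [pow_succ _ (m + 1 + 1)] at this
      omega
    have hsecurity : (buildF (m + 1) r).security =
        m + 1 + (buildF m (min r (2 ^ m))).security + (buildF m (r - 2 ^ m)).security := by
      have hrank := rank_buildF_of_lt hr
      rw [buildF.eq_2] at hrank ⊢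
      rw [security, hrank]
    have hcomplete := security_completeTree_add m
    have hcomplete' := security_completeTree_add (m + 1)
    rcases le_or_gt r (2 ^ m) with hle | hgt
    · have := ih hle
      rw [hsecurity, min_eq_left hle, Nat.sub_eq_zero_of_le hle, buildF_zero_right]
      omega
    · have := ih (show r - 2 ^ m ≤ 2 ^ m by omega)
      have hbits := Nat.length_bitIndices_two_pow_add (show r - 2 ^ m < 2 ^ m by omega)
      rw [Nat.add_sub_cancel' hgt.le] at hbits
      rw [hsecurity, min_eq_right hgt.le, buildF_two_pow]
      omega

theorem security_F_add {ℓ : ℕ} (hℓ : ℓ ≠ 0) :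
    (F ℓ).security + Nat.log 2 ℓ + ℓ.bitIndices.length + 1 = 2 * ℓ := by
  have hle := Nat.pow_log_le_self 2 hℓ
  have hlt := Nat.lt_pow_succ_log_self one_lt_two ℓ
  rw [F]
  generalize Nat.log 2 ℓ = m at hle hlt ⊢
  obtain ⟨r, rfl⟩ := Nat.exists_eq_add_of_le hle
  rw [pow_succ, Nat.mul_two, Nat.add_lt_add_iff_left] at hlt
  have := security_buildF_add hlt.le
  rw [pow_succ] at this
  rw [Nat.add_sub_cancel_left, Nat.length_bitIndices_two_pow_add hlt]
  omega

theorem security_foldl_node_completeTree_add {T : BTree} {ns : List ℕ} (hns : ns.SortedGT)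
    (hT : ∀ n ∈ ns, n < T.rank) :
    (ns.foldl (fun acc m => node acc (completeTree m)) T).security + ns.length =
      T.security + 2 * (ns.map (2 ^ ·)).sum := by
  induction ns generalizing T with
  | nil => rfl
  | cons n ns ih =>
    obtain ⟨hn, hns⟩ := List.pairwise_cons.1 hns.pairwise
    have hrank : (node T (completeTree n)).rank = n + 1 := by
      rw [rank, rank_completeTree, min_eq_right (hT n List.mem_cons_self).le]
    have := ih hns.sortedGT fun k hk => by rw [hrank]; exact Nat.lt_succ_of_lt (hn k hk)
    have hcomplete := security_completeTree_add n
    simp only [List.foldl_cons, List.length_cons, List.map_cons, List.sum_cons] at this ⊢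
    rw [security, hrank] at this
    rw [pow_succ] at hcomplete
    omega

theorem security_TL_add {n : ℕ} {ns : List ℕ} (hL : (n :: ns).SortedGT) :
    (TL (n :: ns)).security + n + (n :: ns).length + 1 = 2 * ((n :: ns).map (2 ^ ·)).sum := by
  obtain ⟨hn, hns⟩ := List.pairwise_cons.1 hL.pairwise
  have := security_foldl_node_completeTree_add hns.sortedGT (T := completeTree n)
    (by simpa using hn)
  have hcomplete := security_completeTree_add n
  simp only [TL, List.length_cons, List.map_cons, List.sum_cons, pow_succ] at this hcomplete ⊢
  omega

end BTree

open BTree in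
/-- For every `ℓ ≥ 2` with binary power representation `L = (n₁, …, n_k)`, the securities
of the almost complete tree `F(ℓ)` and of `T_L` coincide, and both equal `2ℓ − n₁ − k − 1`. -/
theorem security_F_eq_security_TL (ℓ n1 : ℕ) (L' : List ℕ) (hℓ : 2 ≤ ℓ)
    (hdec : (n1 :: L').Chain' (· > ·))
    (hsum : ((n1 :: L').map (2 ^ ·)).sum = ℓ) :
    (F ℓ).security = (TL (n1 :: L')).security ∧
      (F ℓ).security + n1 + (n1 :: L').length + 1 = 2 * ℓ := by
  have hL : (n1 :: L').SortedGT := hdec.sortedGT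
  have hF := security_F_add (ℓ := ℓ) (by omega)
  rw [← hsum, Nat.log_two_sum_map_two_pow hL, Nat.length_bitIndices_sum_map_two_pow hL] at hF
  have hTL := security_TL_add hL
  rw [hsum] at hF hTL
  omega
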